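/- arXiv:2304.06012 — 4 statements merged into one kernel-verified Lean document; each statement's English description precedes it below -/
import Mathlib

section
/- Let γ : [0,1] → X be an injective continuous map into a metric space (an arc) with endpoints p = γ(0), q = γ(1). Suppose H^1(γ([0,1])) = d(p,q) = diam(γ([0,1])). Then for all x, y in the image of γ, the subarc of γ between x and y satisfies H^1(γ(x,y)) = d(x,y), and consequently γ([0,1]) is isometric to the closed line segment [0, diam(γ([0,1]))]. -/
/-!
A connected set containing `x` and `y` has `H¹`-measure at least `dist x y`, since
the 1-Lipschitz map `dist x` sends it onto an interval containing `[0, dist x y]`.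
Cutting the arc at parameters `a ≤ b` splits its measure additively (the pieces meet in
single points), so `H¹(arc) ≥ d(p, γ a) + d(γ a, γ b) + d(γ b, q) ≥ d(p, q) = H¹(arc)`
and every inequality is an equality. In particular `d(p, x) + d(x, y) = d(p, y)` whenever
`x` comes before `y` on the arc, so `x ↦ d(p, x)` is an isometry from the arc onto
`[0, d(p, q)]`.
-/

open scoped ENNReal
open MeasureTheory Set

lemma ENNReal.eq_and_eq_of_le_of_add_le {a b x y : ℝ≥0∞} (hax : a ≤ x) (hby : b ≤ y)
    (h : x + y ≤ a + b) (hxy : x + y ≠ ∞) : x = a ∧ y = b := by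
  obtain ⟨hx, hy⟩ := ENNReal.add_ne_top.1 hxy
  refine ⟨le_antisymm (ENNReal.le_of_add_le_add_right hy ?_) hax,
    le_antisymm (ENNReal.le_of_add_le_add_left hx ?_) hby⟩
  · calc x + y ≤ a + b := h
      _ ≤ a + y := by gcongr
  · calc x + y ≤ a + b := h
      _ ≤ x + b := by gcongr

theorem IsPreconnected.ofReal_dist_le_hausdorffMeasure {X : Type*} [MetricSpace X]
    [MeasurableSpace X] [BorelSpace X] {s : Set X} (hs : IsPreconnected s) {x y : X}
    (hx : x ∈ s) (hy : y ∈ s) : ENNReal.ofReal (dist x y) ≤ μH[1] s :=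
  calc ENNReal.ofReal (dist x y) = μH[1] (Icc 0 (dist x y)) := by
        rw [hausdorffMeasure_real, Real.volume_Icc, sub_zero]
    _ ≤ μH[1] (dist x '' s) :=
        measure_mono <| (hs.image _ (continuous_const.dist continuous_id).continuousOn)
          |>.Icc_subset ⟨x, hx, dist_self x⟩ ⟨y, hy, rfl⟩
    _ ≤ μH[1] s := by
        simpa using (LipschitzWith.dist_right x).hausdorffMeasure_image_le zero_le_one s

theorem MeasureTheory.measure_image_Icc_eq_add {X : Type*} [TopologicalSpace X] [T2Space X]
    [MeasurableSpace X] [OpensMeasurableSpace X] (μ : Measure X) [NullSingletonClass μ]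
    {γ : ℝ → X} {a b c : ℝ} (hcont : ContinuousOn γ (Icc a c)) (hinj : InjOn γ (Icc a c))
    (hab : a ≤ b) (hbc : b ≤ c) :
    μ (γ '' Icc a c) = μ (γ '' Icc a b) + μ (γ '' Icc b c) := by
  have hsub₁ : Icc a b ⊆ Icc a c := Icc_subset_Icc_right hbc
  have hsub₂ : Icc b c ⊆ Icc a c := Icc_subset_Icc_left hab
  have hdisj : AEDisjoint μ (γ '' Icc a b) (γ '' Icc b c) := by
    rw [AEDisjoint, ← hinj.image_inter hsub₁ hsub₂, Icc_inter_Icc_eq_singleton hab hbc,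
      image_singleton, measure_singleton]
  have hmeas : MeasurableSet (γ '' Icc b c) :=
    (isCompact_Icc.image_of_continuousOn (hcont.mono hsub₂)).measurableSet
  rw [← measure_union₀ hmeas.nullMeasurableSet hdisj, ← image_union,
    Icc_union_Icc_eq_Icc hab hbc]

section Arc

variable {X : Type*} [MetricSpace X] [MeasurableSpace X] [BorelSpace X] {γ : ℝ → X} {u w : ℝ}

theorem hausdorffMeasure_image_Icc_eq_dist_split
    (hcont : ContinuousOn γ (Icc u w)) (hinj : InjOn γ (Icc u w))
    (hγ : μH[1] (γ '' Icc u w) = ENNReal.ofReal (dist (γ u) (γ w)))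
    {v : ℝ} (huv : u ≤ v) (hvw : v ≤ w) :
    μH[1] (γ '' Icc u v) = ENNReal.ofReal (dist (γ u) (γ v)) ∧
    μH[1] (γ '' Icc v w) = ENNReal.ofReal (dist (γ v) (γ w)) ∧
    dist (γ u) (γ v) + dist (γ v) (γ w) = dist (γ u) (γ w) := by
  have := Measure.nullSingletonClass_hausdorff X one_pos
  have hadd := measure_image_Icc_eq_add μH[1] hcont hinj huv hvw
  have hchord {s t : ℝ} (hst : s ≤ t) (hsub : Icc s t ⊆ Icc u w) :
      ENNReal.ofReal (dist (γ s) (γ t)) ≤ μH[1] (γ '' Icc s t) :=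
    (isPreconnected_Icc.image _ (hcont.mono hsub)).ofReal_dist_le_hausdorffMeasure
      (mem_image_of_mem _ (left_mem_Icc.2 hst)) (mem_image_of_mem _ (right_mem_Icc.2 hst))
  have hsum : ENNReal.ofReal (dist (γ u) (γ v)) + ENNReal.ofReal (dist (γ v) (γ w)) =
      ENNReal.ofReal (dist (γ u) (γ v) + dist (γ v) (γ w)) :=
    (ENNReal.ofReal_add dist_nonneg dist_nonneg).symm
  have hle : μH[1] (γ '' Icc u v) + μH[1] (γ '' Icc v w) ≤
      ENNReal.ofReal (dist (γ u) (γ v)) + ENNReal.ofReal (dist (γ v) (γ w)) := by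
    rw [← hadd, hγ, hsum]
    exact ENNReal.ofReal_le_ofReal (dist_triangle _ _ _)
  obtain ⟨h₁, h₂⟩ := ENNReal.eq_and_eq_of_le_of_add_le
    (hchord huv (Icc_subset_Icc_right hvw)) (hchord hvw (Icc_subset_Icc_left huv)) hle
    (by rw [← hadd, hγ]; exact ENNReal.ofReal_ne_top)
  refine ⟨h₁, h₂, (ENNReal.ofReal_eq_ofReal_iff (by positivity) dist_nonneg).1 ?_⟩
  rw [← hsum, ← h₁, ← h₂, ← hadd, hγ]

theorem hausdorffMeasure_image_Icc_eq_dist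
    (hcont : ContinuousOn γ (Icc u w)) (hinj : InjOn γ (Icc u w))
    (hγ : μH[1] (γ '' Icc u w) = ENNReal.ofReal (dist (γ u) (γ w)))
    {a b : ℝ} (hua : u ≤ a) (hab : a ≤ b) (hbw : b ≤ w) :
    μH[1] (γ '' Icc a b) = ENNReal.ofReal (dist (γ a) (γ b)) := by
  have hsub : Icc a w ⊆ Icc u w := Icc_subset_Icc_left hua
  have haw := (hausdorffMeasure_image_Icc_eq_dist_split hcont hinj hγ hua (hab.trans hbw)).2.1
  exact (hausdorffMeasure_image_Icc_eq_dist_split (hcont.mono hsub) (hinj.mono hsub) haw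
    hab hbw).1

theorem dist_add_dist_eq_of_le
    (hcont : ContinuousOn γ (Icc u w)) (hinj : InjOn γ (Icc u w))
    (hγ : μH[1] (γ '' Icc u w) = ENNReal.ofReal (dist (γ u) (γ w)))
    {a b : ℝ} (hua : u ≤ a) (hab : a ≤ b) (hbw : b ≤ w) :
    dist (γ u) (γ a) + dist (γ a) (γ b) = dist (γ u) (γ b) := by
  have hsub : Icc u b ⊆ Icc u w := Icc_subset_Icc_right hbw
  have hub := hausdorffMeasure_image_Icc_eq_dist hcont hinj hγ le_rfl (hua.trans hab) hbw
  exact (hausdorffMeasure_image_Icc_eq_dist_split (hcont.mono hsub) (hinj.mono hsub) hub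
    hua hab).2.2

theorem isometry_dist_image_Icc
    (hcont : ContinuousOn γ (Icc u w)) (hinj : InjOn γ (Icc u w))
    (hγ : μH[1] (γ '' Icc u w) = ENNReal.ofReal (dist (γ u) (γ w))) :
    Isometry fun x : γ '' Icc u w ↦ dist (γ u) x := by
  refine Isometry.of_dist_eq ?_
  rintro ⟨_, s, hs, rfl⟩ ⟨_, t, ht, rfl⟩
  rw [Subtype.dist_eq]
  wlog hst : s ≤ t generalizing s t
  · exact (dist_comm _ _).trans ((this t ht s hs (le_of_not_ge hst)).trans (dist_comm _ _))
  rw [Real.dist_eq, ← dist_add_dist_eq_of_le hcont hinj hγ hs.1 hst ht.2, sub_add_cancel_left,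
    abs_neg, abs_of_nonneg dist_nonneg]

theorem image_dist_image_Icc
    (hcont : ContinuousOn γ (Icc u w)) (hinj : InjOn γ (Icc u w))
    (hγ : μH[1] (γ '' Icc u w) = ENNReal.ofReal (dist (γ u) (γ w))) (huw : u ≤ w) :
    dist (γ u) '' (γ '' Icc u w) = Icc 0 (dist (γ u) (γ w)) := by
  refine Subset.antisymm ?_ ?_
  · rintro _ ⟨_, ⟨t, ht, rfl⟩, rfl⟩
    have := dist_add_dist_eq_of_le hcont hinj hγ ht.1 ht.2 le_rfl
    exact ⟨dist_nonneg, by linarith [dist_nonneg (x := γ t) (y := γ w)]⟩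
  · exact ((isPreconnected_Icc.image _ hcont).image _
      (continuous_const.dist continuous_id).continuousOn).Icc_subset
      ⟨γ u, mem_image_of_mem _ (left_mem_Icc.2 huw), dist_self _⟩
      ⟨γ w, mem_image_of_mem _ (right_mem_Icc.2 huw), rfl⟩

theorem nonempty_isometryEquiv_Icc_dist
    (hcont : ContinuousOn γ (Icc u w)) (hinj : InjOn γ (Icc u w))
    (hγ : μH[1] (γ '' Icc u w) = ENNReal.ofReal (dist (γ u) (γ w))) (huw : u ≤ w) :
    Nonempty (γ '' Icc u w ≃ᵢ Icc 0 (dist (γ u) (γ w))) := by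
  rw [← image_dist_image_Icc hcont hinj hγ huw,
    image_eq_range (dist (γ u)) (γ '' Icc u w)]
  exact ⟨(isometry_dist_image_Icc hcont hinj hγ).isometryEquivOnRange⟩

end Arc

/-- An arc whose `H¹`-measure equals the distance between its endpoints, which
also equals its diameter, has `H¹(subarc between x and y) = d(x,y)` for all points
`x, y` on it, and is isometric to the segment `[0, diam]`. -/
theorem stmt3 {X : Type*} [MetricSpace X] [MeasurableSpace X] [BorelSpace X]
    (γ : ℝ → X) (hcont : ContinuousOn γ (Set.Icc 0 1))
    (hinj : Set.InjOn γ (Set.Icc 0 1))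
    (h1 : μH[1] (γ '' Set.Icc 0 1) = ENNReal.ofReal (dist (γ 0) (γ 1)))
    (h2 : dist (γ 0) (γ 1) = Metric.diam (γ '' Set.Icc 0 1)) :
    (∀ a ∈ Set.Icc (0:ℝ) 1, ∀ b ∈ Set.Icc (0:ℝ) 1,
      μH[1] (γ '' Set.uIcc a b) = ENNReal.ofReal (dist (γ a) (γ b))) ∧
    Nonempty (↥(γ '' Set.Icc 0 1) ≃ᵢ
      ↥(Set.Icc (0:ℝ) (Metric.diam (γ '' Set.Icc 0 1)))) := by
  refine ⟨fun a ha b hb ↦ ?_, ?_⟩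
  · rcases le_total a b with hab | hba
    · rw [uIcc_of_le hab]
      exact hausdorffMeasure_image_Icc_eq_dist hcont hinj h1 ha.1 hab hb.2
    · rw [uIcc_of_ge hba, dist_comm]
      exact hausdorffMeasure_image_Icc_eq_dist hcont hinj h1 hb.1 hba ha.2
  · rw [← h2]
    exact nonempty_isometryEquiv_Icc_dist hcont hinj h1 zero_le_one
end

section
/- Identify ℝ³ with ℂ × ℝ. Let (p_k)_{k∈B} be a set of distinct points in [0,1] (B ⊆ ℕ), let A_k ⊆ ℕ be pairwise disjoint sets, and let (b_n)_{n∈ℕ} be a decreasing sequence of positive reals converging to 0. Then the set E = ({0} × [0,1]) ∪ ⋃_{k∈B} ⋃_{n∈A_k} ({t e^{2πi/n} : t ∈ [0, b_n]} × {p_k}) is a closed subset of ℝ³. -/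
/-!
Every whisker at direction index `n` lies within distance `b n` of the core `{0} × [0,1]`, and
`b n → 0`. So a point off the closed core has a neighbourhood meeting only finitely many whiskers;
each whisker is compact and, by disjointness of the `A k`, carries a single height `p k`.
Near such a point the set is therefore a finite union of closed sets.
-/

open Complex Set Filter Topology Metric

theorem isClosed_union_iUnion_of_locallyFinite_off {X ι : Type*} [TopologicalSpace X]
    {C : Set X} {F : ι → Set X} (hC : IsClosed C) (hF : ∀ i, IsClosed (F i))
    (hloc : ∀ x ∉ C, ∃ U ∈ 𝓝 x, {i | (F i ∩ U).Nonempty}.Finite) :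
    IsClosed (C ∪ ⋃ i, F i) := by
  rw [← isOpen_compl_iff, isOpen_iff_mem_nhds]
  intro x hx
  simp only [mem_compl_iff, mem_union, mem_iUnion, not_or, not_exists] at hx
  obtain ⟨U, hU, hfin⟩ := hloc x hx.1
  have hV : Cᶜ ∩ U ∩ ⋂ i ∈ {i | (F i ∩ U).Nonempty}, (F i)ᶜ ∈ 𝓝 x :=
    inter_mem (inter_mem (hC.isOpen_compl.mem_nhds hx.1) hU)
      ((biInter_mem hfin).2 fun i _ => (hF i).isOpen_compl.mem_nhds (hx.2 i))
  refine mem_of_superset hV ?_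
  rintro y ⟨⟨hyC, hyU⟩, hyF⟩
  simp only [mem_iInter, mem_ofPred_eq, mem_compl_iff] at hyF
  simp only [mem_compl_iff, mem_union, mem_iUnion, not_or, not_exists]
  exact ⟨hyC, fun i hyi => hyF i ⟨y, hyi, hyU⟩ hyi⟩

theorem isClosed_union_iUnion_of_subset_cthickening {X ι : Type*} [PseudoMetricSpace X]
    {C : Set X} {F : ι → Set X} {r : ι → ℝ} (hC : IsClosed C) (hF : ∀ i, IsClosed (F i))
    (hr : Tendsto r cofinite (𝓝 0)) (hFC : ∀ i, F i ⊆ cthickening (r i) C) :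
    IsClosed (C ∪ ⋃ i, F i) := by
  refine isClosed_union_iUnion_of_locallyFinite_off hC hF fun x hx => ?_
  obtain ⟨ε, hε, hxε⟩ : ∃ ε > 0, x ∉ cthickening ε C := by
    rw [← hC.closure_eq, closure_eq_iInter_cthickening] at hx
    simpa using hx
  refine ⟨(cthickening ε C)ᶜ, isClosed_cthickening.isOpen_compl.mem_nhds hxε, ?_⟩
  refine (eventually_cofinite.1 (hr.eventually (ge_mem_nhds hε))).subset fun i hi hri => ?_
  obtain ⟨y, hyF, hyε⟩ := hi
  exact hyε (cthickening_mono hri C (hFC i hyF))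

theorem norm_exp_two_pi_I_div_natCast (n : ℕ) : ‖exp (2 * Real.pi * I / n)‖ = 1 := by
  rw [show 2 * Real.pi * I / n = ((2 * Real.pi / n : ℝ) : ℂ) * I by push_cast; ring,
    norm_exp_ofReal_mul_I]

def radialSegment (v : ℂ) (ℓ h : ℝ) : Set (ℂ × ℝ) :=
  {q | ∃ t ∈ Icc (0:ℝ) ℓ, q = ((t : ℂ) * v, h)}

theorem isCompact_radialSegment (v : ℂ) (ℓ h : ℝ) : IsCompact (radialSegment v ℓ h) := by
  have himage : radialSegment v ℓ h = (fun t : ℝ => ((t : ℂ) * v, h)) '' Icc 0 ℓ := by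
    ext q
    simp only [radialSegment, mem_ofPred_eq, mem_image, eq_comm]
  rw [himage]
  exact isCompact_Icc.image (by fun_prop)

theorem radialSegment_subset_cthickening {v : ℂ} (hv : ‖v‖ ≤ 1) (ℓ : ℝ) {h : ℝ} {S : Set ℝ}
    (hh : h ∈ S) : radialSegment v ℓ h ⊆ cthickening ℓ ({0} ×ˢ S) := by
  rintro _ ⟨t, ⟨ht0, htℓ⟩, rfl⟩
  refine mem_cthickening_of_dist_le _ (0, h) _ _ ⟨rfl, hh⟩ ?_
  calc dist ((t : ℂ) * v, h) (0, h) = t * ‖v‖ := by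
        simp [Prod.dist_eq, abs_of_nonneg ht0, mul_nonneg ht0 (norm_nonneg v)]
    _ ≤ ℓ := by nlinarith [norm_nonneg v]

theorem stmt12_general (B : Set ℕ) (p : ℕ → ℝ) (hp : ∀ k ∈ B, p k ∈ Set.Icc (0:ℝ) 1)
    (A : ℕ → Set ℕ)
    (hAdisj : ∀ k j, k ≠ j → A k ∩ A j = ∅)
    (b : ℕ → ℝ)
    (hb0 : Filter.Tendsto b Filter.atTop (nhds 0))
    (E : Set (ℂ × ℝ))
    (hE : E = ({0} ×ˢ Set.Icc (0:ℝ) 1) ∪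
      ⋃ k ∈ B, ⋃ n ∈ A k,
        {q : ℂ × ℝ | ∃ t ∈ Set.Icc (0:ℝ) (b n),
          q = ((t : ℂ) * Complex.exp (2 * Real.pi * Complex.I / n), p k)}) :
    IsClosed E := by
  set F : ℕ → Set (ℂ × ℝ) := fun n =>
    ⋃ k ∈ {k | k ∈ B ∧ n ∈ A k}, radialSegment (exp (2 * Real.pi * I / n)) (b n) (p k)
  have hEF : E = ({0} ×ˢ Icc (0:ℝ) 1) ∪ ⋃ n, F n := by
    ext q
    simp only [hE, F, radialSegment, mem_union, mem_iUnion, mem_ofPred_eq, exists_prop]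
    aesop
  have hheight : ∀ n, {k | k ∈ B ∧ n ∈ A k}.Subsingleton := by
    rintro n k ⟨-, hk⟩ j ⟨-, hj⟩
    by_contra hkj
    simpa [hAdisj k j hkj] using mem_inter hk hj
  have hF : ∀ n, IsClosed (F n) := fun n =>
    (hheight n).finite.isClosed_biUnion fun k _ => (isCompact_radialSegment _ _ _).isClosed
  rw [hEF]
  refine isClosed_union_iUnion_of_subset_cthickening (isClosed_singleton.prod isClosed_Icc) hF
    (Nat.cofinite_eq_atTop ▸ hb0) fun n => iUnion₂_subset fun k hk => ?_
  exact radialSegment_subset_cthickening (norm_exp_two_pi_I_div_natCast n).le _ (hp k hk.1)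

/-- The segment `{0} × [0,1]` with whiskers of lengths `b_n → 0` in directions
`e^{2πi/n}` attached at distinct heights `p_k` is a closed subset of `ℂ × ℝ`. -/
theorem stmt12 (B : Set ℕ) (p : ℕ → ℝ) (hp : ∀ k ∈ B, p k ∈ Set.Icc (0:ℝ) 1)
    (hpinj : ∀ k ∈ B, ∀ j ∈ B, p k = p j → k = j)
    (A : ℕ → Set ℕ) (hA1 : ∀ k, ∀ n ∈ A k, 1 ≤ n)
    (hAdisj : ∀ k j, k ≠ j → A k ∩ A j = ∅)
    (b : ℕ → ℝ) (hbpos : ∀ n, 0 < b n) (hbanti : Antitone b)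
    (hb0 : Filter.Tendsto b Filter.atTop (nhds 0))
    (E : Set (ℂ × ℝ))
    (hE : E = ({0} ×ˢ Set.Icc (0:ℝ) 1) ∪
      ⋃ k ∈ B, ⋃ n ∈ A k,
        {q : ℂ × ℝ | ∃ t ∈ Set.Icc (0:ℝ) (b n),
          q = ((t : ℂ) * Complex.exp (2 * Real.pi * Complex.I / n), p k)}) :
    IsClosed E :=
  stmt12_general B p hp A hAdisj b hb0 E hE
end

section
/- For every real s > 1 and every even integer M ≥ max{10, 7^{1/(s−1)}}: with a_n = log 2/(M^n log(n+1)), b_n = (4 + 2M(1/2 − 1/M)^n)/(M+2), and N_n an integer with 2(b_n − a_n − b_{n+1})/a_{n+1} ≤ N_n ≤ 4(b_n − a_n − b_{n+1})/a_{n+1}, one has ∑_{n=1}^∞ M^n a_n^s + ∑_{n=1}^∞ N_n ((b_n − a_n − b_{n+1})/N_n)^s + (4/(M+2))^s < 1. -/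
/-- The similarity-dimension estimate for the IIFS of Theorem 1.1(2): the total
Lipschitz sum at exponent `s` is less than 1. -/
theorem stmt16 (s : ℝ) (hs : 1 < s) (M : ℕ) (hMeven : Even M)
    (hM10 : 10 ≤ M) (hM7 : (7 : ℝ) ^ (1 / (s - 1)) ≤ M)
    (a b : ℕ → ℝ)
    (ha : ∀ n : ℕ, a n = Real.log 2 / ((M : ℝ) ^ n * Real.log ((n : ℝ) + 1)))
    (hb : ∀ n : ℕ, b n = (4 + 2 * (M : ℝ) * (1/2 - 1/(M : ℝ)) ^ n) / ((M : ℝ) + 2))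
    (N : ℕ → ℕ)
    (hN : ∀ n : ℕ, 1 ≤ n →
      2 * (b n - a n - b (n + 1)) / a (n + 1) ≤ (N n : ℝ) ∧
      (N n : ℝ) ≤ 4 * (b n - a n - b (n + 1)) / a (n + 1)) :
    (∑' n : ℕ, (M : ℝ) ^ (n + 1) * a (n + 1) ^ s) +
      (∑' n : ℕ, (N (n + 1) : ℝ) *
        ((b (n + 1) - a (n + 1) - b (n + 2)) / (N (n + 1) : ℝ)) ^ s) +
      (4 / ((M : ℝ) + 2)) ^ s < 1 := by
  have hm10 : (10:ℝ) ≤ (M:ℝ) := by exact_mod_cast hM10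
  set m : ℝ := (M:ℝ) with hm_def
  have hm0 : (0:ℝ) < m := by linarith
  have hs1 : (0:ℝ) < s - 1 := by linarith
  have hA7 : (7:ℝ) ≤ m ^ (s-1) := by
    have h := Real.rpow_le_rpow (by positivity) hM7 hs1.le
    rwa [← Real.rpow_mul (by norm_num : (0:ℝ) ≤ 7), one_div_mul_cancel (ne_of_gt hs1),
      Real.rpow_one] at h
  have hA0 : 0 < m ^ (s-1) := Real.rpow_pos_of_pos hm0 _
  set q : ℝ := (m ^ (s-1))⁻¹ with hq_def
  have hq0 : 0 < q := inv_pos.2 hA0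
  have hq7 : q ≤ 1/7 := by
    rw [hq_def, one_div]
    exact inv_anti₀ (by norm_num) hA7
  have hq1 : q < 1 := lt_of_le_of_lt hq7 (by norm_num)
  have hkey : ∀ k : ℕ, ((m^k)⁻¹) ^ (s-1) = q ^ k := by
    intro k
    rw [hq_def, Real.inv_rpow (by positivity), ← Real.rpow_natCast m k,
      ← Real.rpow_mul hm0.le, mul_comm, Real.rpow_mul hm0.le, Real.rpow_natCast, inv_pow]
  -- a bounds
  have ha_pos : ∀ k : ℕ, 1 ≤ k → 0 < a k := by
    intro k hk
    have hk1 : (1:ℝ) ≤ (k:ℝ) := by exact_mod_cast hk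
    have hlp : (0:ℝ) < Real.log ((k:ℝ)+1) := Real.log_pos (by linarith)
    rw [ha k]
    exact div_pos (Real.log_pos (by norm_num)) (mul_pos (pow_pos hm0 k) hlp)
  have ha_le : ∀ k : ℕ, 1 ≤ k → a k ≤ (m^k)⁻¹ := by
    intro k hk
    have hk1 : (1:ℝ) ≤ (k:ℝ) := by exact_mod_cast hk
    have hlp : (0:ℝ) < Real.log ((k:ℝ)+1) := Real.log_pos (by linarith)
    have hlog : Real.log 2 ≤ Real.log ((k:ℝ)+1) :=
      Real.log_le_log (by norm_num) (by linarith)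
    rw [ha k, div_le_iff₀ (mul_pos (pow_pos hm0 k) hlp),
      inv_mul_cancel_left₀ (ne_of_gt (pow_pos hm0 k))]
    exact hlog
  -- b difference
  set t : ℝ := 1/2 - 1/m with ht_def
  have hminv : (1:ℝ)/m ≤ 1/10 := by
    rw [div_le_div_iff₀ hm0 (by norm_num)]; linarith
  have hminv0 : (0:ℝ) < 1/m := by positivity
  have ht25 : (2/5 : ℝ) ≤ t := by rw [ht_def]; linarith
  have ht2 : t ≤ 1/2 := by rw [ht_def]; linarith
  have hbt : ∀ k : ℕ, b k - b (k+1) = t ^ k := by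
    intro k
    have h1 : 2*m*(1-t) = m + 2 := by
      rw [ht_def]; field_simp; ring
    have h2 : b k - b (k+1) = t^k * (2*m*(1-t)) / (m+2) := by
      rw [hb k, hb (k+1)]
      push_cast
      rw [pow_succ]
      ring
    rw [h2, h1, mul_div_cancel_right₀ _ (by linarith : m+2 ≠ 0)]
  -- D bounds
  have hDlem : ∀ k : ℕ, 1 ≤ k → 0 < b k - a k - b (k+1) ∧ b k - a k - b (k+1) ≤ 1 := by
    intro k hk
    have heq : b k - a k - b (k+1) = t^k - a k := by
      have := hbt k; linarith
    have h1 : a k ≤ (m^k)⁻¹ := ha_le k hk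
    have h2 : (m^k)⁻¹ ≤ ((10:ℝ)^k)⁻¹ :=
      inv_anti₀ (by positivity) (pow_le_pow_left₀ (by norm_num) hm10 k)
    have h3 : ((10:ℝ)^k)⁻¹ < (2/5:ℝ)^k := by
      have : ((10:ℝ)^k)⁻¹ = (1/10:ℝ)^k := by rw [one_div, inv_pow]
      rw [this]
      exact pow_lt_pow_left₀ (by norm_num) (by norm_num) (by omega)
    have h4 : (2/5:ℝ)^k ≤ t^k := pow_le_pow_left₀ (by norm_num) ht25 k
    have ht0 : (0:ℝ) ≤ t := le_trans (by norm_num) ht25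
    have ht1 : t ≤ 1 := le_trans ht2 (by norm_num)
    have h5 : t^k ≤ 1 := pow_le_one₀ ht0 ht1
    have h6 := ha_pos k hk
    constructor
    · rw [heq]; linarith
    · rw [heq]; linarith
  -- first sum termwise bound
  have hS1gen : ∀ k : ℕ, 1 ≤ k → m ^ k * a k ^ s ≤ q ^ k := by
    intro k hk
    have hap := ha_pos k hk
    have hal := ha_le k hk
    have h1 : a k ^ s = a k * a k ^ (s-1) := by
      nth_rewrite 1 [show s = 1 + (s-1) by ring]
      rw [Real.rpow_add hap, Real.rpow_one]
    have h2 : a k ^ (s-1) ≤ ((m^k)⁻¹) ^ (s-1) :=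
      Real.rpow_le_rpow hap.le hal hs1.le
    calc m^k * a k ^ s = (m^k * a k) * a k ^ (s-1) := by rw [h1]; ring
      _ ≤ (m^k * (m^k)⁻¹) * ((m^k)⁻¹)^(s-1) := by
          apply mul_le_mul (mul_le_mul le_rfl hal hap.le (by positivity)) h2
            (Real.rpow_nonneg hap.le _) (by positivity)
      _ = q ^ k := by rw [mul_inv_cancel₀ (by positivity), one_mul, hkey k]
  -- second sum termwise bound
  have hS2gen : ∀ k : ℕ, 1 ≤ k →
      (N k : ℝ) * ((b k - a k - b (k+1)) / (N k : ℝ)) ^ s ≤ q ^ (k+1) := by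
    intro k hk
    obtain ⟨hN1, _⟩ := hN k hk
    obtain ⟨hD0, hD1⟩ := hDlem k hk
    set D := b k - a k - b (k+1) with hD_def
    have hak1 := ha_pos (k+1) (by omega)
    have hNpos : 0 < (N k : ℝ) :=
      lt_of_lt_of_le (by positivity) hN1
    have hDN : D / N k ≤ a (k+1) / 2 := by
      rw [div_le_iff₀ hak1] at hN1
      rw [div_le_div_iff₀ hNpos (by norm_num)]
      nlinarith
    have hDNpos : 0 < D / N k := div_pos hD0 hNpos
    have hle : D / N k ≤ (m^(k+1))⁻¹ := by
      have := ha_le (k+1) (by omega)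
      linarith
    have h1 : (D / (N k:ℝ)) ^ s = (D / N k) * (D / N k) ^ (s-1) := by
      nth_rewrite 1 [show s = 1 + (s-1) by ring]
      rw [Real.rpow_add hDNpos, Real.rpow_one]
    have h2 : (D/N k)^(s-1) ≤ ((m^(k+1))⁻¹)^(s-1) :=
      Real.rpow_le_rpow hDNpos.le hle hs1.le
    calc (N k : ℝ) * (D / (N k:ℝ)) ^ s = D * (D / N k) ^ (s-1) := by
          rw [h1, ← mul_assoc, mul_div_cancel₀ _ (ne_of_gt hNpos)]
      _ ≤ 1 * ((m^(k+1))⁻¹)^(s-1) :=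
          mul_le_mul hD1 h2 (Real.rpow_nonneg hDNpos.le _) (by norm_num)
      _ = q ^ (k+1) := by rw [one_mul, hkey]
  -- geometric sums
  have hgeoS : Summable (fun n : ℕ => q ^ n) := summable_geometric_of_lt_one hq0.le hq1
  have hgeo1 : Summable (fun n : ℕ => q ^ (n+1)) := by
    simpa [pow_succ] using hgeoS.mul_right q
  have hgeo2 : Summable (fun n : ℕ => q ^ (n+2)) := by
    simpa [pow_succ, mul_assoc] using hgeoS.mul_right (q*q)
  have hS1term : ∀ n : ℕ, m ^ (n+1) * a (n+1) ^ s ≤ q ^ (n+1) :=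
    fun n => hS1gen (n+1) (by omega)
  have hS2term : ∀ n : ℕ, (N (n+1) : ℝ) *
      ((b (n+1) - a (n+1) - b (n+2)) / (N (n+1) : ℝ)) ^ s ≤ q ^ (n+2) :=
    fun n => hS2gen (n+1) (by omega)
  have hS1nn : ∀ n : ℕ, 0 ≤ m ^ (n+1) * a (n+1) ^ s := fun n =>
    mul_nonneg (by positivity) (Real.rpow_nonneg (ha_pos (n+1) (by omega)).le _)
  have hS2nn : ∀ n : ℕ, 0 ≤ (N (n+1) : ℝ) *
      ((b (n+1) - a (n+1) - b (n+2)) / (N (n+1) : ℝ)) ^ s := fun n =>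
    mul_nonneg (Nat.cast_nonneg _)
      (Real.rpow_nonneg (div_nonneg (hDlem (n+1) (by omega)).1.le (Nat.cast_nonneg _)) _)
  have hS1sum : Summable (fun n : ℕ => m ^ (n+1) * a (n+1) ^ s) :=
    Summable.of_nonneg_of_le hS1nn hS1term hgeo1
  have hS2sum : Summable (fun n : ℕ => (N (n+1) : ℝ) *
      ((b (n+1) - a (n+1) - b (n+2)) / (N (n+1) : ℝ)) ^ s) :=
    Summable.of_nonneg_of_le hS2nn hS2term hgeo2
  have hinv : (1-q)⁻¹ ≤ 7/6 := by
    have : ((6:ℝ)/7)⁻¹ = 7/6 := by norm_num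
    rw [← this]
    exact inv_anti₀ (by norm_num) (by linarith)
  have hinv0 : (0:ℝ) ≤ (1-q)⁻¹ := inv_nonneg.2 (by linarith)
  have hT1 : (∑' n : ℕ, m ^ (n+1) * a (n+1) ^ s) ≤ 1/6 := by
    calc (∑' n : ℕ, m ^ (n+1) * a (n+1) ^ s) ≤ ∑' n : ℕ, q ^ (n+1) :=
          Summable.tsum_le_tsum hS1term hS1sum hgeo1
      _ = q * (1-q)⁻¹ := by
          simp_rw [pow_succ, mul_comm (q ^ _) q]
          rw [tsum_mul_left, tsum_geometric_of_lt_one hq0.le hq1]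
      _ ≤ (1/7) * (7/6) := mul_le_mul hq7 hinv hinv0 (by norm_num)
      _ = 1/6 := by norm_num
  have hT2 : (∑' n : ℕ, (N (n+1) : ℝ) *
      ((b (n+1) - a (n+1) - b (n+2)) / (N (n+1) : ℝ)) ^ s) ≤ 1/42 := by
    calc (∑' n : ℕ, (N (n+1) : ℝ) *
        ((b (n+1) - a (n+1) - b (n+2)) / (N (n+1) : ℝ)) ^ s)
        ≤ ∑' n : ℕ, q ^ (n+2) := Summable.tsum_le_tsum hS2term hS2sum hgeo2
      _ = (q*q) * (1-q)⁻¹ := by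
          simp_rw [show ∀ n:ℕ, q^(n+2) = (q*q) * q^n from fun n => by ring]
          rw [tsum_mul_left, tsum_geometric_of_lt_one hq0.le hq1]
      _ ≤ (1/7*(1/7)) * (7/6) := by
          apply mul_le_mul _ hinv hinv0 (by norm_num)
          exact mul_le_mul hq7 hq7 hq0.le (by norm_num)
      _ ≤ 1/42 := by norm_num
  have hT3 : (4 / (m + 2)) ^ s < 1/3 := by
    have h1 : (4:ℝ)/(m+2) ≤ 1/3 := by
      rw [div_le_div_iff₀ (by linarith) (by norm_num)]; linarith
    have h2 : ((4:ℝ)/(m+2))^s ≤ (1/3:ℝ)^s :=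
      Real.rpow_le_rpow (by positivity) h1 (by linarith)
    have h3 : ((1:ℝ)/3)^s < (1/3:ℝ)^(1:ℝ) :=
      Real.rpow_lt_rpow_of_exponent_gt (by norm_num) (by norm_num) hs
    rw [Real.rpow_one] at h3
    linarith
  linarith
end

section
/- Let X be a metric space and K = A ∪ B where B is connected, A ∩ B = {q} for some point q (i.e., B ∩ closure(K \ B) = {q}). Let f : [0,1] → K be continuous with f(t₀) ∈ B \ {q} for some t₀, and suppose p ∈ B is another point. Then there exists a closed interval I ⊆ [0,1] with {p, q} ⊆ f(I) ⊆ B whenever both p and q lie in the image of f and f takes a value outside B. -/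
open Set

private lemma stmt19_aux {X : Type*} [MetricSpace X] (K B : Set X) (q : X)
    (hBcl : IsClosed B)
    (hsep : B ∩ closure (K \ B) ⊆ {q}) (hqB : q ∈ B)
    (a b : ℝ) (hab : a ≤ b) (f : ℝ → X) (hf : ContinuousOn f (Icc a b))
    (hfK : Set.MapsTo f (Icc a b) K) (hfb : f b ∈ B) (hfa : f a ∉ B \ {q}) :
    ∃ u ∈ Icc a b, f u = q ∧ ∀ t ∈ Icc u b, f t ∈ B := by
  set T : Set ℝ := {t | t ∈ Icc a b ∧ f t ∉ B} with hT
  by_cases hTne : T.Nonempty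
  · set u := sSup T with hu
    have hTsub : T ⊆ Icc a b := fun t ht => ht.1
    have hbdd : BddAbove T := ⟨b, fun t ht => ht.1.2⟩
    have hua : a ≤ u := by
      obtain ⟨t, ht⟩ := hTne
      exact le_trans ht.1.1 (le_csSup hbdd ht)
    have hub : u ≤ b := csSup_le hTne (fun t ht => ht.1.2)
    have huI : u ∈ Icc a b := ⟨hua, hub⟩
    -- f u ∈ B
    have hfuB : f u ∈ B := by
      by_contra hfu
      have hub' : u < b := lt_of_le_of_ne hub (fun h => hfu (by rw [h]; exact hfb))
      have hmem : {t | f t ∉ B} ∈ nhdsWithin u (Icc a b) :=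
        (hf u huI).preimage_mem_nhdsWithin (hBcl.isOpen_compl.mem_nhds hfu)
      have hne : (nhdsWithin u (Ioc u b)).NeBot := by
        apply mem_closure_iff_nhdsWithin_neBot.mp
        rw [closure_Ioc hub'.ne]
        exact ⟨le_rfl, hub⟩
      have hmem2 : {t | f t ∉ B} ∈ nhdsWithin u (Ioc u b) :=
        nhdsWithin_mono u (Ioc_subset_Icc_self.trans (Icc_subset_Icc hua le_rfl)) hmem
      have hmem3 : {t | f t ∉ B} ∩ Ioc u b ∈ nhdsWithin u (Ioc u b) :=
        Filter.inter_mem hmem2 self_mem_nhdsWithin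
      obtain ⟨t, htB, ht⟩ := hne.nonempty_of_mem hmem3
      have : t ∈ T := ⟨⟨le_trans hua ht.1.le, ht.2⟩, htB⟩
      exact absurd (le_csSup hbdd this) (not_le.2 ht.1)
    -- f u ∈ closure (K \ B)
    have hucl : u ∈ closure T := csSup_mem_closure hTne hbdd
    have hfucl : f u ∈ closure (K \ B) := by
      have h1 : f u ∈ closure (f '' T) :=
        ((hf u huI).mono hTsub).mem_closure_image hucl
      refine closure_mono ?_ h1
      rintro x ⟨t, ht, rfl⟩
      exact ⟨hfK ht.1, ht.2⟩
    have hfq : f u = q := hsep ⟨hfuB, hfucl⟩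
    refine ⟨u, huI, hfq, fun t ht => ?_⟩
    rcases eq_or_lt_of_le ht.1 with rfl | hlt
    · rw [hfq]; exact hqB
    · by_contra htB
      have : t ∈ T := ⟨⟨le_trans hua hlt.le, ht.2⟩, htB⟩
      exact absurd (le_csSup hbdd this) (not_le.2 hlt)
  · have hall : ∀ t ∈ Icc a b, f t ∈ B := by
      intro t ht
      by_contra h
      exact hTne ⟨t, ht, h⟩
    have hfaB : f a ∈ B := hall a ⟨le_refl a, hab⟩
    have hfaq : f a = q := by
      by_contra h
      exact hfa ⟨hfaB, h⟩
    exact ⟨a, ⟨le_refl a, hab⟩, hfaq, fun t ht => hall t ht⟩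

/-- Topological separation step: if `K = A ∪ B`, `B` connected with
`B ∩ closure(K \ B) = {q}`, and `f : [0,1] → K` is continuous with endpoints
outside `B \ {q}`, hits `p, q ∈ B` and also takes a value outside `B`, then
some subinterval `[u,v]` satisfies `{p,q} ⊆ f([u,v]) ⊆ B`. -/
theorem stmt19 {X : Type*} [MetricSpace X] (K A B : Set X) (p q : X)
    (hK : K = A ∪ B) (hBconn : IsConnected B) (hBcl : IsClosed B)
    (hsep : B ∩ closure (K \ B) = {q})
    (hpB : p ∈ B)
    (f : ℝ → X) (hf : ContinuousOn f (Set.Icc 0 1))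
    (hfK : Set.MapsTo f (Set.Icc 0 1) K)
    (hf0 : f 0 ∉ B \ {q}) (hf1 : f 1 ∉ B \ {q})
    (hp : p ∈ f '' Set.Icc 0 1) (hq : q ∈ f '' Set.Icc 0 1)
    (hout : ∃ t ∈ Set.Icc (0:ℝ) 1, f t ∉ B) :
    ∃ u v : ℝ, 0 ≤ u ∧ u ≤ v ∧ v ≤ 1 ∧
      p ∈ f '' Set.Icc u v ∧ q ∈ f '' Set.Icc u v ∧
      f '' Set.Icc u v ⊆ B := by
  obtain ⟨tp, htp, hftp⟩ := hp
  have hqB : q ∈ B := (hsep.symm.subset rfl).1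
  have hsep' : B ∩ closure (K \ B) ⊆ {q} := hsep.le
  -- left side: on [0, tp]
  obtain ⟨u, huI, hfu, hleft⟩ := stmt19_aux K B q hBcl hsep' hqB 0 tp htp.1 f
    (hf.mono (Icc_subset_Icc le_rfl htp.2)) (hfK.mono_left (Icc_subset_Icc le_rfl htp.2))
    (hftp ▸ hpB) hf0
  -- right side: apply aux to g t = f (-t) on [-1, -tp]
  obtain ⟨u', hu'I, hfu', hright⟩ := stmt19_aux K B q hBcl hsep' hqB (-1) (-tp)
    (neg_le_neg htp.2) (fun t => f (-t))
    (hf.comp continuous_neg.continuousOn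
      (fun t ht => ⟨by linarith [ht.2, htp.1], by linarith [ht.1]⟩))
    (fun t ht => hfK ⟨by linarith [ht.2, htp.1], by linarith [ht.1]⟩)
    (by simpa using hftp ▸ hpB) (by simpa using hf1)
  set v := -u' with hv
  have hvI : v ∈ Icc tp 1 := ⟨by rw [hv]; linarith [hu'I.2], by rw [hv]; linarith [hu'I.1]⟩
  have hfv : f v = q := by simpa [hv] using hfu'
  have hright' : ∀ t ∈ Icc tp v, f t ∈ B := by
    intro t ht
    have := hright (-t) ⟨by have := ht.2; rw [hv] at this; linarith, by linarith [ht.1]⟩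
    simpa using this
  refine ⟨u, v, huI.1, le_trans huI.2 hvI.1, hvI.2, ?_, ?_, ?_⟩
  · exact ⟨tp, ⟨huI.2, hvI.1⟩, hftp⟩
  · exact ⟨u, ⟨le_refl u, le_trans huI.2 hvI.1⟩, hfu⟩
  · rintro x ⟨t, ht, rfl⟩
    rcases le_total t tp with h | h
    · exact hleft t ⟨ht.1, h⟩
    · exact hright' t ⟨h, ht.2⟩
end
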